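/- arXiv:2409.16003 — 2 statements merged into one kernel-verified Lean document; each statement's English description precedes it below -/
import Mathlib

section
/- For positive integers d and K, weights α_1, …, α_K ≥ 0 with ∑_{k=1}^K α_k = 1, means μ_k ∈ ℝ^d and positive definite matrices Σ_k ∈ ℝ^{d×d}, let ψ_θ(x) = ∑_{k=1}^K α_k φ_d(x; μ_k, Σ_k) be the Gaussian mixture density with parameter set θ = {α_k, μ_k, Σ_k}_{k=1}^K, let Ψ_{θ,i} denote the cumulative distribution function of its i-th marginal and ψ_{θ,i} the corresponding marginal density, and define the Gaussian mixture copula density c_gmc(u; θ) = ψ_θ(Ψ_{θ,1}⁻¹(u₁), …, Ψ_{θ,d}⁻¹(u_d)) / ∏_{i=1}^d ψ_{θ,i}(Ψ_{θ,i}⁻¹(u_i)) for u ∈ (0,1)^d. Let A ∈ ℝ^{d×d} be a diagonal matrix with strictly positive diagonal entries and b ∈ ℝ^d, and set θ′ = {α_k, Aμ_k + b, AᵗΣ_k A}_{k=1}^K. Then c_gmc(u; θ) = c_gmc(u; θ′) for all u ∈ (0,1)^d; in particular the likelihood of the Gaussian mixture copula model is invariant under this reparametrization, so the parameters of the Gaussian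 mixture copula model are not identifiable. -/
open MeasureTheory Matrix

/-- Multivariate Gaussian density `φ(x; μ, Σ)` on `ι → ℝ`. -/
noncomputable def gaussPdf {ι : Type*} [Fintype ι] [DecidableEq ι]
    (μ : ι → ℝ) (S : Matrix ι ι ℝ) (x : ι → ℝ) : ℝ :=
  (2 * Real.pi) ^ (-(Fintype.card ι : ℝ) / 2) * S.det ^ (-(1 : ℝ) / 2) *
    Real.exp (-(1 / 2) * ((x - μ) ⬝ᵥ S⁻¹ *ᵥ (x - μ)))

/-- Univariate Gaussian density with mean `m` and variance `v`. -/
noncomputable def gaussPdf1 (m v x : ℝ) : ℝ :=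
  (2 * Real.pi * v) ^ (-(1 : ℝ) / 2) * Real.exp (-(x - m) ^ 2 / (2 * v))

/-- Density of a Gaussian mixture model with `K` components. -/
noncomputable def gmmPdf {d K : ℕ} (α : Fin K → ℝ) (μ : Fin K → Fin d → ℝ)
    (S : Fin K → Matrix (Fin d) (Fin d) ℝ) (x : Fin d → ℝ) : ℝ :=
  ∑ k, α k * gaussPdf (μ k) (S k) x

/-- Density of the `i`-th marginal of a Gaussian mixture model. -/
noncomputable def gmmMargPdf {d K : ℕ} (α : Fin K → ℝ) (μ : Fin K → Fin d → ℝ)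
    (S : Fin K → Matrix (Fin d) (Fin d) ℝ) (i : Fin d) (t : ℝ) : ℝ :=
  ∑ k, α k * gaussPdf1 (μ k i) (S k i i) t

/-- Cumulative distribution function of the `i`-th marginal of a Gaussian mixture model. -/
noncomputable def gmmMargCdf {d K : ℕ} (α : Fin K → ℝ) (μ : Fin K → Fin d → ℝ)
    (S : Fin K → Matrix (Fin d) (Fin d) ℝ) (i : Fin d) (t : ℝ) : ℝ :=
  ∫ s in Set.Iic t, gmmMargPdf α μ S i s

/-- Density of the Gaussian mixture copula, written using quantile maps
`Q i = Ψ_{θ,i}⁻¹` of the marginals. -/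
noncomputable def gmcPdf {d K : ℕ} (α : Fin K → ℝ) (μ : Fin K → Fin d → ℝ)
    (S : Fin K → Matrix (Fin d) (Fin d) ℝ) (Q : Fin d → ℝ → ℝ) (u : Fin d → ℝ) : ℝ :=
  gmmPdf α μ S (fun i => Q i (u i)) / ∏ i, gmmMargPdf α μ S i (Q i (u i))

/-! ### Auxiliary lemmas -/

lemma gaussPdf1_pos {m v x : ℝ} (hv : 0 < v) : 0 < gaussPdf1 m v x := by
  unfold gaussPdf1
  have : (0:ℝ) < 2 * Real.pi * v := by positivity
  positivity

lemma integrable_gaussPdf1 {m v : ℝ} (hv : 0 < v) : Integrable (gaussPdf1 m v) := by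
  have h := integrable_exp_neg_mul_sq (b := 1/(2*v)) (by positivity)
  have h2 := (h.comp_sub_right m).const_mul ((2*Real.pi*v) ^ (-(1:ℝ)/2))
  convert h2 using 2 with x
  unfold gaussPdf1
  congr 1
  ring

lemma continuous_gaussPdf1 (m v : ℝ) : Continuous (gaussPdf1 m v) := by
  unfold gaussPdf1
  fun_prop

lemma gaussPdf1_transform {c v : ℝ} (hc : 0 < c) (hv : 0 < v) (m b x : ℝ) :
    gaussPdf1 (c*m+b) (c^2*v) (c*x+b) = c⁻¹ * gaussPdf1 m v x := by
  unfold gaussPdf1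
  have h2v : (0:ℝ) < 2 * Real.pi * v := by positivity
  have h1 : (2 * Real.pi * (c^2*v)) = c^2 * (2 * Real.pi * v) := by ring
  have h2 : ((c:ℝ)^2) ^ (-(1:ℝ)/2) = c⁻¹ := by
    rw [← Real.rpow_natCast c 2, ← Real.rpow_mul hc.le]
    norm_num
    exact Real.rpow_neg_one c
  have h3 : (2 * Real.pi * (c^2*v)) ^ (-(1:ℝ)/2)
      = c⁻¹ * (2 * Real.pi * v) ^ (-(1:ℝ)/2) := by
    rw [h1, Real.mul_rpow (by positivity) h2v.le, h2]
  rw [h3]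
  have h4 : -(c*x+b - (c*m+b)) ^ 2 / (2 * (c^2*v)) = -(x - m)^2 / (2*v) := by
    field_simp
    ring
  rw [h4]
  ring

section Mix
variable {K : ℕ} (α : Fin K → ℝ) (m v : Fin K → ℝ)

lemma mixPdf_pos (hα : ∀ k, 0 ≤ α k) (hαs : ∑ k, α k = 1) (hv : ∀ k, 0 < v k) (t : ℝ) :
    0 < ∑ k, α k * gaussPdf1 (m k) (v k) t := by
  have hk : ∃ k : Fin K, 0 < α k := by
    by_contra h
    push_neg at h
    have : (∑ k, α k) ≤ 0 := Finset.sum_nonpos fun k _ => h k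
    simp [hαs] at this
    linarith
  obtain ⟨k, hk⟩ := hk
  refine Finset.sum_pos' (fun j _ => mul_nonneg (hα j) (gaussPdf1_pos (hv j)).le) ?_
  exact ⟨k, Finset.mem_univ k, mul_pos hk (gaussPdf1_pos (hv k))⟩

lemma mixPdf_integrable (hv : ∀ k, 0 < v k) :
    Integrable (fun t => ∑ k, α k * gaussPdf1 (m k) (v k) t) := by
  refine integrable_finset_sum _ fun k _ => ?_
  exact (integrable_gaussPdf1 (hv k)).const_mul _

lemma mixCdf_strictMono (hα : ∀ k, 0 ≤ α k) (hαs : ∑ k, α k = 1) (hv : ∀ k, 0 < v k) :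
    StrictMono (fun t => ∫ s in Set.Iic t, ∑ k, α k * gaussPdf1 (m k) (v k) s) := by
  intro t1 t2 h
  have hInt := mixPdf_integrable α m v hv
  rw [← sub_pos, intervalIntegral.integral_Iic_sub_Iic hInt.integrableOn hInt.integrableOn]
  exact intervalIntegral.intervalIntegral_pos_of_pos_on hInt.intervalIntegrable
    (fun x _ => mixPdf_pos α m v hα hαs hv x) h

lemma integral_comp_affine (g : ℝ → ℝ) {c : ℝ} (hc : 0 < c) (b : ℝ) :
    ∫ x, g (c*x+b) = c⁻¹ * ∫ x, g x := by
  have h1 : (∫ x, g (c*x+b)) = ∫ x, (fun y => g (y+b)) (c*x) := by simp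
  rw [h1, MeasureTheory.Measure.integral_comp_mul_left (fun y => g (y+b)) c,
    integral_add_right_eq_self, abs_of_pos (inv_pos.2 hc), smul_eq_mul]

lemma mixCdf_transform (hv : ∀ k, 0 < v k) {c : ℝ} (hc : 0 < c) (b t : ℝ) :
    (∫ s in Set.Iic (c*t+b), ∑ k, α k * gaussPdf1 (c*m k+b) (c^2*v k) s)
      = ∫ s in Set.Iic t, ∑ k, α k * gaussPdf1 (m k) (v k) s := by
  set f := fun s => ∑ k, α k * gaussPdf1 (m k) (v k) s with hfdef
  set f' := fun s => ∑ k, α k * gaussPdf1 (c*m k+b) (c^2*v k) s with hf'def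
  have key : ∀ x, f' (c*x+b) = c⁻¹ * f x := by
    intro x
    simp only [hfdef, hf'def, Finset.mul_sum]
    refine Finset.sum_congr rfl fun k _ => ?_
    rw [gaussPdf1_transform hc (hv k)]
    ring
  have hg : (∫ s in Set.Iic (c*t+b), f' s)
      = ∫ x, Set.indicator (Set.Iic (c*t+b)) f' x := by
    rw [integral_indicator measurableSet_Iic]
  rw [hg]
  have h2 : (∫ x, Set.indicator (Set.Iic (c*t+b)) f' x)
      = c * ∫ x, Set.indicator (Set.Iic (c*t+b)) f' (c*x+b) := by
    rw [integral_comp_affine (Set.indicator (Set.Iic (c*t+b)) f') hc b]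
    field_simp
  rw [h2]
  have h3 : ∀ x, Set.indicator (Set.Iic (c*t+b)) f' (c*x+b)
      = Set.indicator (Set.Iic t) (fun x => c⁻¹ * f x) x := by
    intro x
    by_cases hx : x ≤ t
    · rw [Set.indicator_of_mem (by simpa using hx : x ∈ Set.Iic t),
        Set.indicator_of_mem, key]
      simp only [Set.mem_Iic]
      nlinarith
    · have hx' : t < x := not_le.mp hx
      rw [Set.indicator_of_notMem (by simp only [Set.mem_Iic, not_le]; nlinarith),
        Set.indicator_of_notMem (by simpa using hx)]
  simp_rw [h3]
  rw [integral_indicator measurableSet_Iic, integral_const_mul]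
  field_simp

end Mix

lemma posDef_diag_pos {d : ℕ} {S : Matrix (Fin d) (Fin d) ℝ} (hS : S.PosDef) (i : Fin d) :
    0 < S i i := by
  exact hS.diag_pos

lemma gaussPdf_transform {d : ℕ} {a : Fin d → ℝ} (ha : ∀ i, 0 < a i) (b μ x : Fin d → ℝ)
    {S : Matrix (Fin d) (Fin d) ℝ} (hS : S.PosDef) :
    gaussPdf (fun i => a i * μ i + b i) ((Matrix.diagonal a)ᵀ * S * Matrix.diagonal a)
        (fun i => a i * x i + b i)
      = (∏ i, a i)⁻¹ * gaussPdf μ S x := by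
  set D := Matrix.diagonal a with hD
  set D' := Matrix.diagonal (fun i => (a i)⁻¹) with hD'
  have hPa : 0 < ∏ i, a i := Finset.prod_pos fun i _ => ha i
  have hDT : Dᵀ = D := Matrix.diagonal_transpose a
  have hDD' : D * D' = 1 := by
    rw [hD, hD', Matrix.diagonal_mul_diagonal]
    have h : (fun i => a i * (a i)⁻¹) = fun _ => (1:ℝ) :=
      funext fun i => mul_inv_cancel₀ (ha i).ne'
    rw [h, Matrix.diagonal_one]
  have hD'D : D' * D = 1 := by
    rw [hD, hD', Matrix.diagonal_mul_diagonal]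
    have h : (fun i => (a i)⁻¹ * a i) = fun _ => (1:ℝ) :=
      funext fun i => inv_mul_cancel₀ (ha i).ne'
    rw [h, Matrix.diagonal_one]
  have hSinv : S * S⁻¹ = 1 := Matrix.mul_nonsing_inv S (isUnit_iff_ne_zero.mpr hS.det_pos.ne')
  have hdet : (Dᵀ * S * D).det = (∏ i, a i)^2 * S.det := by
    rw [Matrix.det_mul, Matrix.det_mul, hDT, hD, Matrix.det_diagonal]
    ring
  have hinv : (Dᵀ * S * D)⁻¹ = D' * S⁻¹ * D' := by
    apply Matrix.inv_eq_right_inv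
    rw [hDT]
    calc D * S * D * (D' * S⁻¹ * D')
        = D * S * (D * D') * S⁻¹ * D' := by noncomm_ring
      _ = D * (S * S⁻¹) * D' := by rw [hDD']; noncomm_ring
      _ = 1 := by rw [hSinv, mul_one, hDD']
  have hw : ((fun i => a i * x i + b i) - fun i => a i * μ i + b i) = D *ᵥ (x - μ) := by
    funext i
    simp [hD, Matrix.mulVec_diagonal]
    ring
  have hquad : (D *ᵥ (x - μ)) ⬝ᵥ ((D' * S⁻¹ * D') *ᵥ (D *ᵥ (x - μ)))
      = (x - μ) ⬝ᵥ S⁻¹ *ᵥ (x - μ) := by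
    set w := x - μ
    have h1 : (D' * S⁻¹ * D') *ᵥ (D *ᵥ w) = D' *ᵥ (S⁻¹ *ᵥ w) := by
      rw [Matrix.mulVec_mulVec, Matrix.mul_assoc, Matrix.mul_assoc, hD'D, Matrix.mul_one,
        ← Matrix.mulVec_mulVec]
    rw [h1]
    simp only [dotProduct, Matrix.mulVec_diagonal, hD, hD']
    refine Finset.sum_congr rfl fun i _ => ?_
    field_simp [(ha i).ne']
  have hrpow : ((∏ i, a i)^2 * S.det) ^ (-(1:ℝ)/2)
      = (∏ i, a i)⁻¹ * S.det ^ (-(1:ℝ)/2) := by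
    rw [Real.mul_rpow (by positivity) hS.det_pos.le]
    congr 1
    rw [← Real.rpow_natCast (∏ i, a i) 2, ← Real.rpow_mul hPa.le]
    norm_num
    exact Real.rpow_neg_one _
  unfold gaussPdf
  rw [hdet, hinv, hw, hquad, hrpow]
  ring

/-- **Non-identifiability of the Gaussian mixture copula model.**  For a diagonal matrix `A`
with strictly positive diagonal `a` and `b ∈ ℝ^d`, the Gaussian mixture copula density with
parameters `θ' = {α_k, Aμ_k + b, AᵀΣ_k A}` coincides with the one with parameters
`θ = {α_k, μ_k, Σ_k}` on the open cube `(0,1)^d`. -/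
theorem stmt_3 {d K : ℕ} (α : Fin K → ℝ) (hα : ∀ k, 0 ≤ α k) (hαs : ∑ k, α k = 1)
    (μ : Fin K → Fin d → ℝ) (S : Fin K → Matrix (Fin d) (Fin d) ℝ)
    (hS : ∀ k, (S k).PosDef)
    (a : Fin d → ℝ) (ha : ∀ i, 0 < a i) (b : Fin d → ℝ)
    (Q Q' : Fin d → ℝ → ℝ)
    (hQ : ∀ i, ∀ u ∈ Set.Ioo (0:ℝ) 1, gmmMargCdf α μ S i (Q i u) = u)
    (hQ' : ∀ i, ∀ u ∈ Set.Ioo (0:ℝ) 1,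
      gmmMargCdf α (fun k i => a i * μ k i + b i)
        (fun k => (Matrix.diagonal a)ᵀ * S k * Matrix.diagonal a) i (Q' i u) = u) :
    ∀ u : Fin d → ℝ, (∀ i, u i ∈ Set.Ioo (0:ℝ) 1) →
      gmcPdf α μ S Q u =
        gmcPdf α (fun k i => a i * μ k i + b i)
          (fun k => (Matrix.diagonal a)ᵀ * S k * Matrix.diagonal a) Q' u := by
  intro u hu
  set μ' : Fin K → Fin d → ℝ := fun k i => a i * μ k i + b i with hμ'
  set S' : Fin K → Matrix (Fin d) (Fin d) ℝ :=
    fun k => (Matrix.diagonal a)ᵀ * S k * Matrix.diagonal a with hS'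
  have hdiag : ∀ k (i : Fin d), 0 < S k i i := fun k i => posDef_diag_pos (hS k) i
  have hentry : ∀ k (i : Fin d), S' k i i = (a i)^2 * S k i i := by
    intro k i
    show ((Matrix.diagonal a)ᵀ * S k * Matrix.diagonal a) i i = _
    rw [Matrix.diagonal_transpose, Matrix.mul_diagonal, Matrix.diagonal_mul]
    ring
  have hdiag' : ∀ k (i : Fin d), 0 < S' k i i := by
    intro k i
    rw [hentry]
    have := ha i
    have := hdiag k i
    positivity
  have hmarg' : ∀ (i : Fin d) t, gmmMargPdf α μ' S' i t
      = ∑ k, α k * gaussPdf1 (a i * μ k i + b i) ((a i)^2 * S k i i) t := by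
    intro i t
    unfold gmmMargPdf
    refine Finset.sum_congr rfl fun k _ => ?_
    rw [hentry]
  have hcdf' : ∀ (i : Fin d) t, gmmMargCdf α μ' S' i (a i * t + b i) = gmmMargCdf α μ S i t := by
    intro i t
    unfold gmmMargCdf
    simp_rw [hmarg']
    exact mixCdf_transform α (fun k => μ k i) (fun k => S k i i) (fun k => hdiag k i)
      (ha i) (b i) t
  have hmono : ∀ i : Fin d, StrictMono (gmmMargCdf α μ' S' i) := by
    intro i
    have h := mixCdf_strictMono α (fun k => a i * μ k i + b i)
      (fun k => (a i)^2 * S k i i) hα hαs (fun k => by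
        have := ha i; have := hdiag k i; positivity)
    intro t1 t2 ht
    have := h ht
    unfold gmmMargCdf
    simp_rw [hmarg']
    exact this
  have key : ∀ i : Fin d, Q' i (u i) = a i * Q i (u i) + b i := by
    intro i
    apply (hmono i).injective
    rw [hQ' i _ (hu i), hcdf', hQ i _ (hu i)]
  have hPa : 0 < ∏ i, a i := Finset.prod_pos fun i _ => ha i
  unfold gmcPdf
  simp_rw [key]
  have hnum : gmmPdf α μ' S' (fun i => a i * Q i (u i) + b i)
      = (∏ i, a i)⁻¹ * gmmPdf α μ S (fun i => Q i (u i)) := by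
    unfold gmmPdf
    rw [Finset.mul_sum]
    refine Finset.sum_congr rfl fun k _ => ?_
    rw [hμ', hS']
    rw [gaussPdf_transform ha b (μ k) (fun i => Q i (u i)) (hS k)]
    ring
  have hden : (∏ i, gmmMargPdf α μ' S' i (a i * Q i (u i) + b i))
      = (∏ i, a i)⁻¹ * ∏ i, gmmMargPdf α μ S i (Q i (u i)) := by
    have step : ∀ i : Fin d, gmmMargPdf α μ' S' i (a i * Q i (u i) + b i)
        = (a i)⁻¹ * gmmMargPdf α μ S i (Q i (u i)) := by
      intro i
      rw [hmarg']
      unfold gmmMargPdf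
      rw [Finset.mul_sum]
      refine Finset.sum_congr rfl fun k _ => ?_
      rw [gaussPdf1_transform (ha i) (hdiag k i)]
      ring
    simp_rw [step]
    rw [Finset.prod_mul_distrib, Finset.prod_inv_distrib]
  rw [hnum, hden, mul_div_mul_left _ _ (inv_ne_zero hPa.ne')]
end

section
/- Let d = ℓ + m, p ≥ 1, and consider the multivariate unified skew-normal density f_{SUN_{d,p}}(x; ξ, γ, ω, Ω*) = φ_d(x − ξ; Ω) · Φ_p(γ + Δᵗ Ω̄⁻¹ ω⁻¹ (x − ξ); Γ − Δᵗ Ω̄⁻¹ Δ) / Φ_p(γ; Γ), with ξ = (ξ₁, ξ₂) ∈ ℝ^ℓ × ℝ^m, ω = diag(ω₁, …, ω_d) with positive entries, Ω = ωΩ̄ω, and Ω* = [[Γ, Δᵗ], [Δ, Ω̄]] positive definite with Ω̄ a correlation matrix. Partition Ω, Ω̄ and Δ conformally with the split d = ℓ + m (blocks Ω₁₁, Ω₁₂, Ω₂₂, Ω̄₁₁, Ω̄₁₂, Ω̄₂₂, Δ₁ ∈ ℝ^{ℓ×p}, Δ₂ ∈ ℝ^{m×p}), and let ω₁, ω₂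 be the corresponding diagonal blocks of ω. For x₂ ∈ ℝ^m define ξ_{1.2} = ξ₁ + Ω₁₂ Ω₂₂⁻¹ (x₂ − ξ₂), γ_{1.2} = γ + Δ₂ᵗ Ω̄₂₂⁻¹ ω₂⁻¹ (x₂ − ξ₂), Ω̄_{11.2} = Ω̄₁₁ − Ω̄₁₂ Ω̄₂₂⁻¹ Ω̄₂₁, Δ_{1.2} = Δ₁ − Ω̄₁₂ Ω̄₂₂⁻¹ Δ₂, Γ_{1.2} = Γ − Δ₂ᵗ Ω̄₂₂⁻¹ Δ₂, and Ω*_{1.2} = [[Γ_{1.2}, Δ_{1.2}ᵗ], [Δ_{1.2}, Ω̄_{11.2}]]. Then for every x₁ ∈ ℝ^ℓ, the ratio f_{SUN_{d,p}}((x₁, x₂); ξ, γ, ω, Ω*) / f_{SUN_{m,p}}(x₂; ξ₂, γ, ω₂, Ω*₂) equals f_{SUN_{ℓ,p}}(x₁; ξ_{1.2}, γ_{1.2}, ω₁, Ω*_{1.2}) up to the appropriate rescaling of Ω̄_{11.2} to a correlation matrix; that is, the conditional distribution of the first ℓ coordinates of a SUN_{d,p} vector given that the last m coordinates equal x₂ is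 the unified skew-normal distribution SUN_{ℓ,p}(ξ_{1.2}, γ_{1.2}, ω₁, Ω*_{1.2}). -/
open MeasureTheory Matrix

/-- Centered multivariate Gaussian cumulative distribution function `Φ(t; Σ)`. -/
noncomputable def gaussCdf {ι : Type*} [Fintype ι] [DecidableEq ι]
    (S : Matrix ι ι ℝ) (t : ι → ℝ) : ℝ :=
  ∫ x in Set.Iic t, gaussPdf 0 S x

/-- Density of the multivariate unified skew-normal distribution
`SUN(ξ, γ, ω1, Ω* = [[Γ, Δᵀ], [Δ, Ω̄]])`, with `ω = diagonal w` and `Ω = ωΩ̄ω`: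
`f(x) = φ(x − ξ; Ω) Φ(γ + Δᵀ Ω̄⁻¹ ω⁻¹ (x − ξ); Γ − Δᵀ Ω̄⁻¹ Δ) / Φ(γ; Γ)`.
(The formula is invariant under the rescaling of `Ω̄` to a correlation matrix, so it also
serves as the density when `Ω̄` is merely positive definite.) -/
noncomputable def sunPdf {ι κ : Type*} [Fintype ι] [Fintype κ] [DecidableEq ι] [DecidableEq κ]
    (ξ : ι → ℝ) (γ : κ → ℝ) (w : ι → ℝ) (Γ : Matrix κ κ ℝ) (Δ : Matrix ι κ ℝ)
    (Ωb : Matrix ι ι ℝ) (x : ι → ℝ) : ℝ :=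
  gaussPdf 0 (Matrix.diagonal w * Ωb * Matrix.diagonal w) (x - ξ) *
      gaussCdf (Γ - Δᵀ * Ωb⁻¹ * Δ) (γ + Δᵀ *ᵥ Ωb⁻¹ *ᵥ fun i => (x i - ξ i) / w i) /
    gaussCdf Γ γ

set_option linter.unusedSectionVars false


section aux
variable {m n : Type*} [Fintype m] [Fintype n] [DecidableEq m] [DecidableEq n]

lemma posDef_submatrix_inj {M : Matrix n n ℝ} (hM : M.PosDef) (e : m → n)
    (he : Function.Injective e) : (M.submatrix e e).PosDef := by
  classical
  set P : Matrix n m ℝ := (1 : Matrix n n ℝ).submatrix id e with hPdef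
  have hscal : ∀ x : m → ℝ, x ⬝ᵥ (M.submatrix e e) *ᵥ x = (P *ᵥ x) ⬝ᵥ M *ᵥ (P *ᵥ x) := by
    intro x
    have hP : M.submatrix e e = Pᵀ * M * P := by
      rw [hPdef]
      rw [(by simp : M = 1 * M * 1), submatrix_mul (he₂ := Function.bijective_id),
        submatrix_mul (he₂ := Function.bijective_id), submatrix_id_id]
      congr 1
      · ext i j
        simp [Matrix.mul_apply, Matrix.one_apply, Matrix.submatrix, Matrix.transpose_apply]
    rw [hP, ← Matrix.mulVec_mulVec, ← Matrix.mulVec_mulVec, Matrix.dotProduct_mulVec x,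
      Matrix.vecMul_transpose]
  have hPx : ∀ x : m → ℝ, x ≠ 0 → P *ᵥ x ≠ 0 := by
    intro x hx h0
    obtain ⟨i, hi⟩ := Function.ne_iff.mp hx
    apply hi
    have := congrFun h0 (e i)
    simpa [hPdef, Matrix.mulVec, dotProduct, Matrix.one_apply, he.eq_iff] using this
  refine Matrix.PosDef.of_dotProduct_mulVec_pos ?_ (fun x hx => ?_)
  · have h1 := hM.1
    unfold Matrix.IsHermitian at h1 ⊢
    rw [conjTranspose_submatrix, h1]
  · simp only [star_trivial]
    rw [hscal x]
    have := hM.dotProduct_mulVec_pos (hPx x hx)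
    simpa using this

end aux

section aux2
variable {m n : Type*} [Fintype m] [Fintype n] [DecidableEq m] [DecidableEq n]

lemma posDef_of_fromBlocks_inr {A : Matrix m m ℝ} {B : Matrix m n ℝ} {C : Matrix n m ℝ}
    {D : Matrix n n ℝ} (h : (fromBlocks A B C D).PosDef) : D.PosDef := by
  have := posDef_submatrix_inj h (Sum.inr : n → m ⊕ n) Sum.inr_injective
  convert this using 1
  ext i j; rfl

lemma posDef_of_fromBlocks_inl {A : Matrix m m ℝ} {B : Matrix m n ℝ} {C : Matrix n m ℝ}
    {D : Matrix n n ℝ} (h : (fromBlocks A B C D).PosDef) : A.PosDef := by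
  have := posDef_submatrix_inj h (Sum.inl : m → m ⊕ n) Sum.inl_injective
  convert this using 1
  ext i j; rfl

lemma schurPosDef {A : Matrix m m ℝ} {B : Matrix m n ℝ} {D : Matrix n n ℝ}
    (h : (fromBlocks A B Bᵀ D).PosDef) : (A - B * D⁻¹ * Bᵀ).PosDef := by
  have hD : D.PosDef := posDef_of_fromBlocks_inr h
  have := hD.isUnit.invertible
  have hBH : (Bᴴ : Matrix n m ℝ) = Bᵀ := conjTranspose_eq_transpose_of_trivial B
  have hherm : (A - B * D⁻¹ * Bᵀ).IsHermitian := by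
    rw [← hBH]
    exact (Matrix.IsHermitian.fromBlocks₂₂ A B hD.1).mp (by rw [hBH]; exact h.1)
  refine Matrix.PosDef.of_dotProduct_mulVec_pos hherm (fun x hx => ?_)
  have key := Matrix.schur_complement_eq₂₂ A B x (-((D⁻¹ * Bᴴ) *ᵥ x)) hD.1
  simp only [add_neg_cancel, star_trivial, hBH, Matrix.zero_vecMul, zero_dotProduct,
    zero_add] at key
  have hz : Sum.elim x (-((D⁻¹ * Bᴴ) *ᵥ x)) ≠ 0 := by
    obtain ⟨i, hi⟩ := Function.ne_iff.mp hx
    intro h0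
    exact hi (by simpa using congrFun h0 (Sum.inl i))
  have hpos := h.dotProduct_mulVec_pos hz
  rw [star_trivial, Matrix.dotProduct_mulVec] at hpos
  simp only [hBH] at hpos
  rw [key] at hpos
  rw [star_trivial, Matrix.dotProduct_mulVec]
  exact hpos

end aux2


section aux3
variable {m n : Type*} [Fintype m] [Fintype n] [DecidableEq m] [DecidableEq n]
variable {A : Matrix m m ℝ} {B : Matrix m n ℝ} {D : Matrix n n ℝ}

lemma blockInv (h : (fromBlocks A B Bᵀ D).PosDef) :
    (fromBlocks A B Bᵀ D)⁻¹ =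
      fromBlocks (A - B * D⁻¹ * Bᵀ)⁻¹ (-((A - B * D⁻¹ * Bᵀ)⁻¹ * B * D⁻¹))
        (-(D⁻¹ * Bᵀ * (A - B * D⁻¹ * Bᵀ)⁻¹))
        (D⁻¹ + D⁻¹ * Bᵀ * (A - B * D⁻¹ * Bᵀ)⁻¹ * B * D⁻¹) := by
  have hD : D.PosDef := posDef_of_fromBlocks_inr h
  have hS : (A - B * D⁻¹ * Bᵀ).PosDef := schurPosDef h
  letI iD := hD.isUnit.invertible
  have hinv : (⅟D : Matrix n n ℝ) = D⁻¹ := invOf_eq_nonsing_inv D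
  have hSS : A - B * ⅟D * Bᵀ = A - B * D⁻¹ * Bᵀ := by rw [hinv]
  letI iS' : Invertible (A - B * ⅟D * Bᵀ) := by rw [hSS]; exact hS.isUnit.invertible
  letI iM : Invertible (fromBlocks A B Bᵀ D) := h.isUnit.invertible
  have key := Matrix.invOf_fromBlocks₂₂_eq A B Bᵀ D
  have h2 : (⅟(A - B * ⅟D * Bᵀ)) = (A - B * D⁻¹ * Bᵀ)⁻¹ := by
    rw [invOf_eq_nonsing_inv, hSS]
  rw [Matrix.invOf_eq_nonsing_inv, h2, hinv] at key
  exact key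
end aux3

section aux4
variable {m n p : Type*} [Fintype m] [Fintype n] [Fintype p]
variable [DecidableEq m] [DecidableEq n] [DecidableEq p]
variable {A : Matrix m m ℝ} {B : Matrix m n ℝ} {D : Matrix n n ℝ}

lemma quadSplit (h : (fromBlocks A B Bᵀ D).PosDef) (z₁ : m → ℝ) (z₂ : n → ℝ) :
    Sum.elim z₁ z₂ ⬝ᵥ (fromBlocks A B Bᵀ D)⁻¹ *ᵥ Sum.elim z₁ z₂ =
      z₂ ⬝ᵥ D⁻¹ *ᵥ z₂ +
      (z₁ - (B * D⁻¹) *ᵥ z₂) ⬝ᵥ (A - B * D⁻¹ * Bᵀ)⁻¹ *ᵥ (z₁ - (B * D⁻¹) *ᵥ z₂) := by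
  rw [blockInv h]

  have hD := posDef_of_fromBlocks_inr h
  have hS := schurPosDef h
  set S := A - B * D⁻¹ * Bᵀ with hSdef
  have hDt : Dᵀ = D := by
    rw [← conjTranspose_eq_transpose_of_trivial]; exact hD.1
  have hSt : Sᵀ = S := by
    rw [← conjTranspose_eq_transpose_of_trivial]; exact hS.1
  have hDit : (D⁻¹)ᵀ = D⁻¹ := by rw [Matrix.transpose_nonsing_inv, hDt]
  have hSit : (S⁻¹)ᵀ = S⁻¹ := by rw [Matrix.transpose_nonsing_inv, hSt]
  set F := -(S⁻¹ * B * D⁻¹) with hF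
  set H := D⁻¹ + D⁻¹ * Bᵀ * S⁻¹ * B * D⁻¹ with hH
  have hFt : Fᴴ = -(D⁻¹ * Bᵀ * S⁻¹) := by
    rw [conjTranspose_eq_transpose_of_trivial, hF]
    simp only [Matrix.transpose_neg, Matrix.transpose_mul, hDit, hSit, Matrix.mul_assoc]
  letI iSi : Invertible (S⁻¹) := hS.inv.isUnit.invertible
  have hSinv : S⁻¹⁻¹ = S := Matrix.nonsing_inv_nonsing_inv S hS.det_pos.ne'.isUnit
  have hSF : S⁻¹⁻¹ * F = -(B * D⁻¹) := by
    rw [hSinv, hF, Matrix.mul_neg, ← Matrix.mul_assoc, ← Matrix.mul_assoc,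
      Matrix.mul_nonsing_inv _ hS.det_pos.ne'.isUnit, Matrix.one_mul]
  have hHF : H - Fᴴ * S⁻¹⁻¹ * F = D⁻¹ := by
    rw [hSinv, hFt, hF, hH]
    rw [Matrix.neg_mul, Matrix.mul_neg, Matrix.neg_mul, neg_neg]
    have : D⁻¹ * Bᵀ * S⁻¹ * S * (S⁻¹ * B * D⁻¹) = D⁻¹ * Bᵀ * S⁻¹ * B * D⁻¹ := by
      simp only [Matrix.mul_assoc]
      rw [Matrix.nonsing_inv_mul_cancel_left _ _ hS.det_pos.ne'.isUnit]
    rw [this, add_sub_cancel_right]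
  have key := Matrix.schur_complement_eq₁₁ (A := S⁻¹) F H z₁ z₂ hS.inv.1
  rw [hSF, hHF] at key
  simp only [star_trivial, hFt] at key
  rw [Matrix.dotProduct_mulVec, key, add_comm]
  rw [Matrix.neg_mulVec, ← sub_eq_add_neg]
  rw [Matrix.dotProduct_mulVec, Matrix.dotProduct_mulVec]

lemma matSplit (h : (fromBlocks A B Bᵀ D).PosDef) (Γ : Matrix p p ℝ)
    (Δ₁ : Matrix m p ℝ) (Δ₂ : Matrix n p ℝ) :
    Γ - (fromRows Δ₁ Δ₂)ᵀ * (fromBlocks A B Bᵀ D)⁻¹ * fromRows Δ₁ Δ₂ =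
      (Γ - Δ₂ᵀ * D⁻¹ * Δ₂) -
      (Δ₁ - B * D⁻¹ * Δ₂)ᵀ * (A - B * D⁻¹ * Bᵀ)⁻¹ * (Δ₁ - B * D⁻¹ * Δ₂) := by
  have hD := posDef_of_fromBlocks_inr h
  have hS := schurPosDef h
  set S := A - B * D⁻¹ * Bᵀ with hSdef
  have hDt : Dᵀ = D := by
    rw [← conjTranspose_eq_transpose_of_trivial]; exact hD.1
  have hSt : Sᵀ = S := by
    rw [← conjTranspose_eq_transpose_of_trivial]; exact hS.1
  have hDit : (D⁻¹)ᵀ = D⁻¹ := by rw [Matrix.transpose_nonsing_inv, hDt]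
  have hSit : (S⁻¹)ᵀ = S⁻¹ := by rw [Matrix.transpose_nonsing_inv, hSt]
  rw [blockInv h, transpose_fromRows, fromCols_mul_fromBlocks, fromCols_mul_fromRows]
  simp only [← hSdef]
  simp only [Matrix.transpose_sub, Matrix.transpose_mul, Matrix.transpose_neg, hDit, hSit,
    Matrix.sub_mul, Matrix.mul_sub, Matrix.add_mul, Matrix.mul_add, Matrix.neg_mul,
    Matrix.mul_neg, Matrix.mul_assoc, neg_neg]
  abel

lemma vecSplit (h : (fromBlocks A B Bᵀ D).PosDef)
    (Δ₁ : Matrix m p ℝ) (Δ₂ : Matrix n p ℝ) (u₁ : m → ℝ) (u₂ : n → ℝ) :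
    (fromRows Δ₁ Δ₂)ᵀ *ᵥ ((fromBlocks A B Bᵀ D)⁻¹ *ᵥ Sum.elim u₁ u₂) =
      Δ₂ᵀ *ᵥ (D⁻¹ *ᵥ u₂) +
      (Δ₁ - B * D⁻¹ * Δ₂)ᵀ *ᵥ ((A - B * D⁻¹ * Bᵀ)⁻¹ *ᵥ (u₁ - (B * D⁻¹) *ᵥ u₂)) := by
  have hD := posDef_of_fromBlocks_inr h
  have hS := schurPosDef h
  set S := A - B * D⁻¹ * Bᵀ with hSdef
  have hDt : Dᵀ = D := by
    rw [← conjTranspose_eq_transpose_of_trivial]; exact hD.1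
  have hSt : Sᵀ = S := by
    rw [← conjTranspose_eq_transpose_of_trivial]; exact hS.1
  have hDit : (D⁻¹)ᵀ = D⁻¹ := by rw [Matrix.transpose_nonsing_inv, hDt]
  have hSit : (S⁻¹)ᵀ = S⁻¹ := by rw [Matrix.transpose_nonsing_inv, hSt]
  rw [blockInv h, transpose_fromRows, fromBlocks_mulVec, fromCols_mulVec_sumElim]
  simp only [← hSdef]
  simp only [Sum.elim_comp_inl, Sum.elim_comp_inr, Matrix.transpose_sub, Matrix.transpose_mul,
    Matrix.transpose_neg, hDit, hSit, Matrix.neg_mulVec, Matrix.sub_mulVec, Matrix.add_mulVec,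
    Matrix.mulVec_add, Matrix.mulVec_sub, Matrix.mulVec_neg, ← Matrix.mulVec_mulVec,
    Matrix.mul_assoc, neg_neg]
  abel
end aux4

section analytic
variable {ι : Type*} [Fintype ι] [DecidableEq ι]

lemma gaussPdf_pos {S : Matrix ι ι ℝ} (hS : S.PosDef) (μ x : ι → ℝ) : 0 < gaussPdf μ S x := by
  unfold gaussPdf
  have h1 : (0:ℝ) < 2 * Real.pi := by positivity
  exact mul_pos (mul_pos (Real.rpow_pos_of_pos h1 _) (Real.rpow_pos_of_pos hS.det_pos _))
    (Real.exp_pos _)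

lemma quad_lower {M : Matrix ι ι ℝ} (hM : M.PosDef) :
    ∃ c > 0, ∀ x : ι → ℝ, c * (∑ i, x i ^ 2) ≤ x ⬝ᵥ M *ᵥ x := by
  classical
  have hcont : Continuous fun x : ι → ℝ => x ⬝ᵥ M *ᵥ x := by
    unfold dotProduct Matrix.mulVec
    exact continuous_finset_sum _ fun i _ => (continuous_apply i).mul
      (continuous_finset_sum _ fun j _ => continuous_const.mul (continuous_apply j))
  cases isEmpty_or_nonempty ι with
  | inl hemp =>
    refine ⟨1, one_pos, fun x => ?_⟩
    simp [dotProduct]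
  | inr hne =>
    set K : Set (ι → ℝ) := {x | ∑ i, x i ^ 2 = 1} with hK
    have hKc : IsClosed K := isClosed_eq (by continuity) continuous_const
    have hKsub : K ⊆ Set.Icc (fun _ => (-1:ℝ)) (fun _ => (1:ℝ)) := by
      intro x hx
      have hx' : ∑ i, x i ^ 2 = 1 := hx
      have h2 : ∀ i, x i ^ 2 ≤ 1 := fun i => by
        rw [← hx']
        exact Finset.single_le_sum (fun j _ => sq_nonneg (x j)) (Finset.mem_univ i)
      constructor <;> intro i <;> dsimp only <;> nlinarith [sq_nonneg (x i + 1), sq_nonneg (x i - 1), h2 i]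
    have hKcomp : IsCompact K := (isCompact_Icc).of_isClosed_subset hKc hKsub
    have hKne : K.Nonempty := by
      obtain ⟨i⟩ := hne
      refine ⟨Pi.single i (1:ℝ), ?_⟩
      have h3 : ∑ j, Pi.single i (1:ℝ) j ^ 2 = (1:ℝ) := by
        rw [Finset.sum_eq_single i]
        · simp
        · intro b _ hb; simp [Pi.single_apply, hb]
        · simp
      exact h3
    obtain ⟨x₀, hx₀K, hmin⟩ := hKcomp.exists_isMinOn hKne hcont.continuousOn
    have hx₀ne : x₀ ≠ 0 := by
      intro h0
      have : (∑ i, x₀ i ^ 2) = 1 := hx₀K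
      rw [h0] at this
      simp at this
    refine ⟨x₀ ⬝ᵥ M *ᵥ x₀, by simpa using hM.dotProduct_mulVec_pos hx₀ne, fun x => ?_⟩
    by_cases hx : x = 0
    · simp [hx, dotProduct]
    · have hr : 0 < ∑ i, x i ^ 2 := by
        obtain ⟨i, hi⟩ := Function.ne_iff.mp hx
        exact Finset.sum_pos' (fun j _ => sq_nonneg (x j))
          ⟨i, Finset.mem_univ i, pow_two_pos_of_ne_zero hi⟩
      set t := Real.sqrt (∑ i, x i ^ 2) with ht
      have htpos : 0 < t := Real.sqrt_pos.mpr hr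
      have ht2 : t ^ 2 = ∑ i, x i ^ 2 := Real.sq_sqrt hr.le
      have hyK : (t⁻¹ • x) ∈ K := by
        show ∑ i, (t⁻¹ • x) i ^ 2 = 1
        simp only [Pi.smul_apply, smul_eq_mul, mul_pow, ← Finset.mul_sum]
        rw [← ht2]
        field_simp
      have hle := hmin hyK
      have hyval : (t⁻¹ • x) ⬝ᵥ M *ᵥ (t⁻¹ • x) = t⁻¹ ^ 2 * (x ⬝ᵥ M *ᵥ x) := by
        rw [smul_dotProduct, Matrix.mulVec_smul, dotProduct_smul]
        simp [sq, mul_assoc]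
      have : (x₀ ⬝ᵥ M *ᵥ x₀) ≤ t⁻¹ ^ 2 * (x ⬝ᵥ M *ᵥ x) := by
        rw [← hyval]; exact hle
      calc (x₀ ⬝ᵥ M *ᵥ x₀) * (∑ i, x i ^ 2) ≤ (t⁻¹ ^ 2 * (x ⬝ᵥ M *ᵥ x)) * (∑ i, x i ^ 2) := by
            apply mul_le_mul_of_nonneg_right this hr.le
        _ = x ⬝ᵥ M *ᵥ x := by
            rw [← ht2]
            field_simp
  
end analytic

section analytic2
variable {ι : Type*} [Fintype ι] [DecidableEq ι]

lemma gaussPdf_continuous (S : Matrix ι ι ℝ) (μ : ι → ℝ) : Continuous (gaussPdf μ S) := by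
  unfold gaussPdf
  refine continuous_const.mul (Real.continuous_exp.comp ?_)
  refine continuous_const.mul ?_
  unfold dotProduct Matrix.mulVec
  refine continuous_finset_sum _ fun i _ => ?_
  refine (((continuous_apply i).sub continuous_const)).mul ?_
  unfold dotProduct
  exact continuous_finset_sum _ fun j _ =>
    continuous_const.mul ((continuous_apply j).sub continuous_const)

lemma gaussPdf_integrable {S : Matrix ι ι ℝ} (hS : S.PosDef) :
    Integrable (gaussPdf 0 S) := by
  obtain ⟨c, hc, hq⟩ := quad_lower hS.inv
  set K : ℝ := (2 * Real.pi) ^ (-(Fintype.card ι : ℝ) / 2) * S.det ^ (-(1 : ℝ) / 2) with hKdef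
  have hK : 0 < K := by
    have h1 : (0:ℝ) < 2 * Real.pi := by positivity
    exact mul_pos (Real.rpow_pos_of_pos h1 _) (Real.rpow_pos_of_pos hS.det_pos _)
  have hg : Integrable (fun x : ι → ℝ => K * ∏ i, Real.exp (-(c/2) * x i ^ 2)) := by
    refine Integrable.const_mul ?_ K
    exact Integrable.fintype_prod (fun i => integrable_exp_neg_mul_sq (by positivity))
  refine hg.mono' ((gaussPdf_continuous S 0).aestronglyMeasurable) ?_
  refine Filter.Eventually.of_forall fun x => ?_
  rw [Real.norm_eq_abs, abs_of_pos (gaussPdf_pos hS 0 x)]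
  unfold gaussPdf
  rw [← hKdef]
  rw [← Real.exp_sum]
  simp only [← neg_mul, ← Finset.mul_sum]
  refine mul_le_mul_of_nonneg_left (Real.exp_le_exp.mpr ?_) hK.le
  have := hq (x - 0)
  simp only [sub_zero] at this ⊢
  nlinarith [this]

lemma gaussCdf_pos {S : Matrix ι ι ℝ} (hS : S.PosDef) (t : ι → ℝ) : 0 < gaussCdf S t := by
  unfold gaussCdf
  have hint : IntegrableOn (gaussPdf 0 S) (Set.Iic t) := (gaussPdf_integrable hS).integrableOn
  have hIic : Set.Iic t = Set.pi Set.univ (fun i => Set.Iic (t i)) := by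
    ext x
    simp [Set.mem_Iic, Set.mem_pi, Pi.le_def]
  have hmeas : MeasurableSet (Set.Iic t) := by
    rw [hIic]
    exact MeasurableSet.univ_pi fun i => measurableSet_Iic
  have hsub : Set.pi Set.univ (fun i => Set.Ioo (t i - 1) (t i)) ⊆ Set.Iic t := by
    intro x hx
    rw [Set.mem_Iic, Pi.le_def]
    exact fun i => ((hx i (Set.mem_univ i)).2).le
  have hμ : 0 < volume (Set.Iic t) := by
    refine lt_of_lt_of_le ?_ (measure_mono hsub)
    rw [volume_pi_pi]
    rw [show (fun i => volume (Set.Ioo (t i - 1) (t i))) = fun i => 1 from funext fun i => by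
      rw [Real.volume_Ioo]; norm_num]
    simp
  rw [setIntegral_pos_iff_support_of_nonneg_ae ?_ hint]
  · have hsupp : Function.support (gaussPdf 0 S) = Set.univ := by
      ext x; simp [Function.mem_support, (gaussPdf_pos hS 0 x).ne']
    rw [hsupp, Set.univ_inter]
    exact hμ
  · exact Filter.Eventually.of_forall fun x => (gaussPdf_pos hS 0 x).le

end analytic2



lemma posDef_diag_conj {n : Type*} [Fintype n] [DecidableEq n] {d : n → ℝ}
    (hd : ∀ i, 0 < d i) {M : Matrix n n ℝ} (hM : M.PosDef) :
    (Matrix.diagonal d * M * Matrix.diagonal d).PosDef := by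
  have hvm : ∀ x : n → ℝ, x ᵥ* Matrix.diagonal d = Matrix.diagonal d *ᵥ x := by
    intro x
    ext i
    rw [Matrix.vecMul_diagonal, Matrix.mulVec_diagonal, mul_comm]
  refine Matrix.PosDef.of_dotProduct_mulVec_pos ?_ (fun x hx => ?_)
  · have h1 : (Matrix.diagonal d : Matrix n n ℝ)ᴴ = Matrix.diagonal d := by
      rw [conjTranspose_eq_transpose_of_trivial, Matrix.diagonal_transpose]
    show (Matrix.diagonal d * M * Matrix.diagonal d)ᴴ = _
    rw [Matrix.conjTranspose_mul, Matrix.conjTranspose_mul, h1, hM.1, Matrix.mul_assoc]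
  · have hkey : x ⬝ᵥ (Matrix.diagonal d * M * Matrix.diagonal d) *ᵥ x =
        (Matrix.diagonal d *ᵥ x) ⬝ᵥ M *ᵥ (Matrix.diagonal d *ᵥ x) := by
      rw [← Matrix.mulVec_mulVec, ← Matrix.mulVec_mulVec, Matrix.dotProduct_mulVec x, hvm]
    have hne : Matrix.diagonal d *ᵥ x ≠ 0 := by
      obtain ⟨i, hi⟩ := Function.ne_iff.mp hx
      intro h0
      have := congrFun h0 i
      rw [Matrix.mulVec_diagonal] at this
      exact hi (by
        have := mul_eq_zero.mp this
        rcases this with h | h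
        · exact absurd h (hd i).ne'
        · exact h)
    have := hM.dotProduct_mulVec_pos hne
    simp only [star_trivial] at this ⊢
    rw [hkey]
    exact this


section gsplit2
variable {m n : Type*} [Fintype m] [Fintype n] [DecidableEq m] [DecidableEq n]
variable {A : Matrix m m ℝ} {B : Matrix m n ℝ} {D : Matrix n n ℝ}

lemma gaussPdf_split (h : (fromBlocks A B Bᵀ D).PosDef) (z₁ : m → ℝ) (z₂ : n → ℝ) :
    gaussPdf 0 (fromBlocks A B Bᵀ D) (Sum.elim z₁ z₂) =
      gaussPdf 0 D z₂ * gaussPdf 0 (A - B * D⁻¹ * Bᵀ) (z₁ - (B * D⁻¹) *ᵥ z₂) := by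
  have hD := posDef_of_fromBlocks_inr h
  have hS := schurPosDef h
  letI iD := hD.isUnit.invertible
  have hdet : (fromBlocks A B Bᵀ D).det = D.det * (A - B * D⁻¹ * Bᵀ).det := by
    rw [Matrix.det_fromBlocks₂₂]
    congr 2
    rw [invOf_eq_nonsing_inv]
  unfold gaussPdf
  rw [sub_zero, sub_zero, sub_zero, quadSplit h, hdet]
  have hcard : ((2 * Real.pi) ^ (-(Fintype.card (m ⊕ n) : ℝ) / 2) : ℝ) =
      (2 * Real.pi) ^ (-(Fintype.card n : ℝ) / 2) *
      (2 * Real.pi) ^ (-(Fintype.card m : ℝ) / 2) := by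
    rw [← Real.rpow_add (by positivity)]
    congr 1
    rw [Fintype.card_sum]
    push_cast
    ring
  have hrdet : ((D.det * (A - B * D⁻¹ * Bᵀ).det) ^ (-(1:ℝ)/2) : ℝ) =
      D.det ^ (-(1:ℝ)/2) * (A - B * D⁻¹ * Bᵀ).det ^ (-(1:ℝ)/2) :=
    Real.mul_rpow hD.det_pos.le hS.det_pos.le
  rw [hcard, hrdet, mul_add, Real.exp_add]
  ring

end gsplit2

/-- **Conditioning the unified skew-normal distribution.**  For the split `d = ℓ + m`, the
conditional density of the first `ℓ` coordinates of a `SUN_{d,p}(ξ, γ, ω1, Ω*)` vector given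
the last `m` coordinates equal `x₂` — i.e. the ratio of the joint `SUN_{d,p}` density at
`(x₁, x₂)` to the marginal `SUN_{m,p}(ξ₂, γ, ω₂1, Ω*₂)` density at `x₂` — is the
`SUN_{ℓ,p}(ξ_{1.2}, γ_{1.2}, ω₁1, Ω*_{1.2})` density (up to the rescaling of `Ω̄_{11.2}` to a
correlation matrix, under which the density formula is invariant), where
`ξ_{1.2} = ξ₁ + Ω₁₂Ω₂₂⁻¹(x₂ − ξ₂)`, `γ_{1.2} = γ + Δ₂ᵀΩ̄₂₂⁻¹ω₂⁻¹(x₂ − ξ₂)`,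
`Ω̄_{11.2} = Ω̄₁₁ − Ω̄₁₂Ω̄₂₂⁻¹Ω̄₂₁`, `Δ_{1.2} = Δ₁ − Ω̄₁₂Ω̄₂₂⁻¹Δ₂` and
`Γ_{1.2} = Γ − Δ₂ᵀΩ̄₂₂⁻¹Δ₂`. -/
theorem stmt_13 {l m p : ℕ}
    (ξ₁ : Fin l → ℝ) (ξ₂ : Fin m → ℝ) (γ : Fin p → ℝ)
    (w₁ : Fin l → ℝ) (w₂ : Fin m → ℝ) (hw₁ : ∀ i, 0 < w₁ i) (hw₂ : ∀ i, 0 < w₂ i)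
    (Γ : Matrix (Fin p) (Fin p) ℝ)
    (Δ₁ : Matrix (Fin l) (Fin p) ℝ) (Δ₂ : Matrix (Fin m) (Fin p) ℝ)
    (Ω11 : Matrix (Fin l) (Fin l) ℝ) (Ω12 : Matrix (Fin l) (Fin m) ℝ)
    (Ω21 : Matrix (Fin m) (Fin l) ℝ) (Ω22 : Matrix (Fin m) (Fin m) ℝ)
    (hpd : (Matrix.fromBlocks Γ (Matrix.fromRows Δ₁ Δ₂)ᵀ (Matrix.fromRows Δ₁ Δ₂)
        (Matrix.fromBlocks Ω11 Ω12 Ω21 Ω22)).PosDef)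
    (hcorr₁ : ∀ i, Ω11 i i = 1) (hcorr₂ : ∀ i, Ω22 i i = 1)
    (x₂ : Fin m → ℝ) (x₁ : Fin l → ℝ) :
    sunPdf (Sum.elim ξ₁ ξ₂) γ (Sum.elim w₁ w₂) Γ (Matrix.fromRows Δ₁ Δ₂)
        (Matrix.fromBlocks Ω11 Ω12 Ω21 Ω22) (Sum.elim x₁ x₂) /
      sunPdf ξ₂ γ w₂ Γ Δ₂ Ω22 x₂ =
    sunPdf
      (ξ₁ + (Matrix.diagonal w₁ * Ω12 * Matrix.diagonal w₂) *ᵥ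
        (Matrix.diagonal w₂ * Ω22 * Matrix.diagonal w₂)⁻¹ *ᵥ (x₂ - ξ₂))
      (γ + Δ₂ᵀ *ᵥ Ω22⁻¹ *ᵥ fun i => (x₂ i - ξ₂ i) / w₂ i)
      w₁
      (Γ - Δ₂ᵀ * Ω22⁻¹ * Δ₂)
      (Δ₁ - Ω12 * Ω22⁻¹ * Δ₂)
      (Ω11 - Ω12 * Ω22⁻¹ * Ω21)
      x₁ := by
  classical
  -- Symmetry facts
  have hH := hpd.1
  rw [Matrix.isHermitian_fromBlocks_iff] at hH
  obtain ⟨hΓH, hδ1, hδ2, hObH⟩ := hH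
  rw [Matrix.isHermitian_fromBlocks_iff] at hObH
  obtain ⟨hAH, hBC, hCB, hDH⟩ := hObH
  have hC : Ω21 = Ω12ᵀ := by
    rw [← hBC, conjTranspose_eq_transpose_of_trivial]
  subst hC
  -- Positive definiteness of the pieces
  have hObpd : (fromBlocks Ω11 Ω12 Ω12ᵀ Ω22).PosDef := posDef_of_fromBlocks_inr hpd
  have hΓpd : Γ.PosDef := posDef_of_fromBlocks_inl hpd
  have hDpd : Ω22.PosDef := posDef_of_fromBlocks_inr hObpd
  have hSpd : (Ω11 - Ω12 * Ω22⁻¹ * Ω12ᵀ).PosDef := schurPosDef hObpd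
  have hmarg : (fromBlocks Γ Δ₂ᵀ Δ₂ Ω22).PosDef := by
    have hinj : Function.Injective (Sum.map (id : Fin p → Fin p) (Sum.inr : Fin m → Fin l ⊕ Fin m)) :=
      Function.Injective.sumMap Function.injective_id Sum.inr_injective
    have := posDef_submatrix_inj hpd _ hinj
    convert this using 1
    ext i j
    rcases i with i | i <;> rcases j with j | j <;>
      simp [Matrix.fromBlocks, Matrix.fromRows, Matrix.submatrix, Matrix.transpose_apply] <;> rfl
  have hΓ2pd : (Γ - Δ₂ᵀ * Ω22⁻¹ * Δ₂).PosDef := by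
    have h' : (fromBlocks Γ Δ₂ᵀ (Δ₂ᵀ)ᵀ Ω22).PosDef := by rwa [transpose_transpose]
    have := schurPosDef h'
    rwa [transpose_transpose] at this
  -- Scaled block matrices
  have hwsum : ∀ i : Fin l ⊕ Fin m, 0 < Sum.elim w₁ w₂ i := by
    rintro (i | i)
    · exact hw₁ i
    · exact hw₂ i
  have hW1pd : (Matrix.diagonal w₁).PosDef := Matrix.PosDef.diagonal hw₁
  have hW2pd : (Matrix.diagonal w₂).PosDef := Matrix.PosDef.diagonal hw₂
  have hW2unit : IsUnit (Matrix.diagonal w₂).det := hW2pd.det_pos.ne'.isUnit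
  set W1 := Matrix.diagonal w₁ with hW1def
  set W2 := Matrix.diagonal w₂ with hW2def
  set S := Ω11 - Ω12 * Ω22⁻¹ * Ω12ᵀ with hSdef
  set Q := W1 * Ω12 * W2 with hQdef
  set T := W2 * Ω22 * W2 with hTdef
  set P := W1 * Ω11 * W1 with hPdef
  have hW1t : W1ᵀ = W1 := by rw [hW1def]; exact Matrix.diagonal_transpose w₁
  have hW2t : W2ᵀ = W2 := by rw [hW2def]; exact Matrix.diagonal_transpose w₂
  have hQt : Qᵀ = W2 * Ω12ᵀ * W1 := by
    rw [hQdef, Matrix.transpose_mul, Matrix.transpose_mul, hW1t, hW2t, Matrix.mul_assoc]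
  have hblocks : Matrix.diagonal (Sum.elim w₁ w₂) * fromBlocks Ω11 Ω12 Ω12ᵀ Ω22 *
      Matrix.diagonal (Sum.elim w₁ w₂) = fromBlocks P Q Qᵀ T := by
    rw [← Matrix.fromBlocks_diagonal, Matrix.fromBlocks_multiply, Matrix.fromBlocks_multiply, hQt]
    congr 1 <;> simp [hPdef, hQdef, hTdef] <;> rfl
  have hSigpd : (fromBlocks P Q Qᵀ T).PosDef := by
    rw [← hblocks]
    exact posDef_diag_conj hwsum hObpd
  have hTpd : T.PosDef := posDef_of_fromBlocks_inr hSigpd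
  have hWSpd : (W1 * S * W1).PosDef := by
    rw [hW1def, hSdef]
    exact posDef_diag_conj hw₁ hSpd
  -- cancellation helpers
  have c1l : ∀ X : Matrix (Fin m) (Fin l) ℝ, W2 * (W2⁻¹ * X) = X := fun X =>
    Matrix.mul_nonsing_inv_cancel_left _ _ hW2unit
  have c2l : ∀ X : Matrix (Fin m) (Fin l) ℝ, W2⁻¹ * (W2 * X) = X := fun X =>
    Matrix.nonsing_inv_mul_cancel_left _ _ hW2unit
  have c1m : ∀ X : Matrix (Fin m) (Fin m) ℝ, W2 * (W2⁻¹ * X) = X := fun X =>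
    Matrix.mul_nonsing_inv_cancel_left _ _ hW2unit
  have hPQS : P - Q * T⁻¹ * Qᵀ = W1 * S * W1 := by
    rw [hPdef, hQdef, hQt, hTdef, hSdef]
    simp only [Matrix.mul_inv_rev, Matrix.mul_sub, Matrix.sub_mul, Matrix.mul_assoc, c1l, c2l, c1m]
  -- Gaussian factorization
  have hgauss := gaussPdf_split hSigpd (x₁ - ξ₁) (x₂ - ξ₂)
  rw [hPQS] at hgauss
  have hxsub : Sum.elim x₁ x₂ - Sum.elim ξ₁ ξ₂ = Sum.elim (x₁ - ξ₁) (x₂ - ξ₂) := by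
    ext (i | i) <;> simp
  have hzeta : x₁ - (ξ₁ + Q *ᵥ T⁻¹ *ᵥ (x₂ - ξ₂)) = (x₁ - ξ₁) - (Q * T⁻¹) *ᵥ (x₂ - ξ₂) := by
    rw [Matrix.mulVec_mulVec, sub_add_eq_sub_sub]
  -- rescaled vectors
  set u₁ : Fin l → ℝ := fun i => (x₁ i - ξ₁ i) / w₁ i with hu₁def
  set u₂ : Fin m → ℝ := fun i => (x₂ i - ξ₂ i) / w₂ i with hu₂def
  have hu : (fun i => (Sum.elim x₁ x₂ i - Sum.elim ξ₁ ξ₂ i) / Sum.elim w₁ w₂ i) =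
      Sum.elim u₁ u₂ := by
    ext (i | i) <;> simp [hu₁def, hu₂def]
  have hW2inv : W2⁻¹ = Matrix.diagonal (fun i => (w₂ i)⁻¹) := by
    apply Matrix.inv_eq_right_inv
    rw [hW2def, Matrix.diagonal_mul_diagonal]
    rw [show (fun i => w₂ i * (w₂ i)⁻¹) = fun _ => (1:ℝ) from
      funext fun i => mul_inv_cancel₀ (hw₂ i).ne']
    exact Matrix.diagonal_one
  have hu₂W : u₂ = W2⁻¹ *ᵥ (x₂ - ξ₂) := by
    ext i
    rw [hW2inv, Matrix.mulVec_diagonal]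
    simp [hu₂def, div_eq_inv_mul]
  have hQT : (Q * T⁻¹) *ᵥ (x₂ - ξ₂) = W1 *ᵥ ((Ω12 * Ω22⁻¹) *ᵥ u₂) := by
    rw [hu₂W, Matrix.mulVec_mulVec, Matrix.mulVec_mulVec]
    congr 1
    rw [hQdef, hTdef]
    simp only [Matrix.mul_inv_rev, Matrix.mul_assoc, c1m]
  have hv : (fun i => (x₁ i - (ξ₁ + Q *ᵥ T⁻¹ *ᵥ (x₂ - ξ₂)) i) / w₁ i) =
      u₁ - (Ω12 * Ω22⁻¹) *ᵥ u₂ := by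
    have h1 : x₁ - (ξ₁ + Q *ᵥ T⁻¹ *ᵥ (x₂ - ξ₂)) =
        (x₁ - ξ₁) - W1 *ᵥ ((Ω12 * Ω22⁻¹) *ᵥ u₂) := by
      rw [hzeta, hQT]
    ext i
    have h2 := congrFun h1 i
    simp only [Pi.sub_apply, Pi.add_apply] at h2 ⊢
    rw [show x₁ i - (ξ₁ i + (Q *ᵥ T⁻¹ *ᵥ (x₂ - ξ₂)) i) = x₁ i - (ξ₁ + Q *ᵥ T⁻¹ *ᵥ (x₂ - ξ₂)) i
      from rfl] at h2 ⊢
    rw [h2, hW1def, Matrix.mulVec_diagonal]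
    have hw := (hw₁ i).ne'
    have : u₁ i = (x₁ i - ξ₁ i) / w₁ i := rfl
    rw [this]
    field_simp
  -- cdf argument identities
  have hmat : Γ - (fromRows Δ₁ Δ₂)ᵀ * (fromBlocks Ω11 Ω12 Ω12ᵀ Ω22)⁻¹ * fromRows Δ₁ Δ₂ =
      (Γ - Δ₂ᵀ * Ω22⁻¹ * Δ₂) -
      (Δ₁ - Ω12 * Ω22⁻¹ * Δ₂)ᵀ * S⁻¹ * (Δ₁ - Ω12 * Ω22⁻¹ * Δ₂) := by
    rw [hSdef]; exact matSplit hObpd Γ Δ₁ Δ₂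
  have hvec : (fromRows Δ₁ Δ₂)ᵀ *ᵥ ((fromBlocks Ω11 Ω12 Ω12ᵀ Ω22)⁻¹ *ᵥ Sum.elim u₁ u₂) =
      Δ₂ᵀ *ᵥ (Ω22⁻¹ *ᵥ u₂) +
      (Δ₁ - Ω12 * Ω22⁻¹ * Δ₂)ᵀ *ᵥ (S⁻¹ *ᵥ (u₁ - (Ω12 * Ω22⁻¹) *ᵥ u₂)) := by
    rw [hSdef]; exact vecSplit hObpd Δ₁ Δ₂ u₁ u₂
  -- positivity
  have hG2ne : gaussPdf 0 T (x₂ - ξ₂) ≠ 0 := (gaussPdf_pos hTpd 0 _).ne'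
  have hCne : gaussCdf Γ γ ≠ 0 := (gaussCdf_pos hΓpd γ).ne'
  have hB2ne : gaussCdf (Γ - Δ₂ᵀ * Ω22⁻¹ * Δ₂) (γ + Δ₂ᵀ *ᵥ Ω22⁻¹ *ᵥ u₂) ≠ 0 :=
    (gaussCdf_pos hΓ2pd _).ne'
  -- assemble
  simp only [sunPdf]
  simp only [← hW1def, ← hW2def]
  rw [hblocks, ← hTdef, hxsub, hu, ← hu₂def, hgauss, hzeta, hv, hmat, hvec,
    ← add_assoc]
  have key : ∀ g2 g1 c1 cg c2 : ℝ, g2 ≠ 0 → cg ≠ 0 → c2 ≠ 0 →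
      g2 * g1 * c1 / cg / (g2 * c2 / cg) = g1 * c1 / c2 := by
    intro g2 g1 c1 cg c2 h1 h2 h3
    field_simp
  exact key _ _ _ _ _ hG2ne hCne hB2ne
end
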